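/- arXiv:1611.03648 — 2 statements merged into one kernel-verified Lean document; each statement's English description precedes it below -/
import Mathlib

section
/- Gallai–Edmonds decomposition: For every maximum matching F of a graph G there is a partition of V(G) into sets Q, R, S such that (1) F restricted to Q is a perfect matching of the induced subgraph on Q; (2) R is the union of vertex sets of connected components H_i of G − S, each of which is hypomatchable, and F matches all of V(H_i) except one vertex r_i within H_i; (3) every vertex of S is matched by F, and for every s ∈ S the F-partner of s equals r_i for some component H_i. -/
variable {V : Type*}

/-- A matching: a set of non-loop edges that are pairwise vertex-disjoint. -/
def IsMatching (M : Set (Sym2 V)) : Prop :=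
  (∀ e ∈ M, ¬ e.IsDiag) ∧ ∀ e ∈ M, ∀ f ∈ M, e ≠ f → ∀ v, v ∈ e → v ∉ f

/-- A vertex is covered by an edge set if it belongs to some edge. -/
def covered (M : Set (Sym2 V)) (v : V) : Prop := ∃ e ∈ M, v ∈ e

/-- A `K`–`F`-alternating path: a (simple) nonempty list of vertices whose
odd-numbered edges (0-indexed: even positions) lie in `K` and even-numbered edges lie in `F`. -/
def AltPath (K F : Set (Sym2 V)) (p : List V) : Prop :=
  p ≠ [] ∧ p.Nodup ∧ ∀ i, ∀ h : i + 1 < p.length,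
    s(p[i]'(Nat.lt_of_succ_lt h), p[i+1]'h) ∈ (if i % 2 = 0 then K else F)


/-- `x` is evenly `K`-reachable from `a`: there is a `K`–`F`-alternating path from `a` to `x`
with an even number of edges (an odd number of vertices); `x = a` via the empty path. -/
def evenReach (K F : Set (Sym2 V)) (a x : V) : Prop :=
  ∃ (p : List V) (hp : p ≠ []), AltPath K F p ∧ p.head hp = a ∧ p.getLast hp = x ∧
    Odd p.length

/-- `x` is oddly `K`-reachable from `a`: there is a `K`–`F`-alternating path from `a` to `x`
with an odd number of edges (an even, positive, number of vertices). -/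
def oddReach (K F : Set (Sym2 V)) (a x : V) : Prop :=
  ∃ (p : List V) (hp : p ≠ []), AltPath K F p ∧ p.head hp = a ∧ p.getLast hp = x ∧
    Even p.length


/-- A maximum matching of the graph with edge set `E`. -/
def IsMaxMatching (E F : Set (Sym2 V)) : Prop :=
  F ⊆ E ∧ IsMatching F ∧ ∀ M ⊆ E, IsMatching M → M.ncard ≤ F.ncard

/-- The edges of `F` contained in the vertex set `C` (the induced edge set `F[C]`). -/
def edgesIn (F : Set (Sym2 V)) (C : Set V) : Set (Sym2 V) := {e ∈ F | ∀ u ∈ e, u ∈ C}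

/-- The edges of `E` avoiding the vertex set `S` (edges of `G − S`). -/
def avoid (E : Set (Sym2 V)) (S : Set V) : Set (Sym2 V) := {e ∈ E | ∀ u ∈ e, u ∉ S}

/-- The connected component of `v` in the graph with edge set `E'`. -/
def comp (E' : Set (Sym2 V)) (v : V) : Set V :=
  {u | Relation.ReflTransGen (fun a b => s(a, b) ∈ E') v u}

/-- The induced subgraph on `C` is hypomatchable (factor-critical): for every `v ∈ C` there
is a matching inside `C` covering exactly `C \ {v}`. -/
def Hypomatchable (E : Set (Sym2 V)) (C : Set V) : Prop :=
  ∀ v ∈ C, ∃ M ⊆ edgesIn E C, IsMatching M ∧ ¬ covered M v ∧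
    ∀ u ∈ C, u ≠ v → covered M u

/-- A Gallai–Edmonds decomposition `(Q, R, S)` of the graph `E` with respect to the maximum
matching `F`: (1) `F[Q]` is a perfect matching of `Q`; (2) `R` is a union of connected
components of `G − S`, each hypomatchable and matched by `F` within itself except for exactly
one exposed vertex (its `r_i`); (3) every `s ∈ S` is matched by `F` to the exposed vertex
`r_i` of some component. -/
def IsGE (E F : Set (Sym2 V)) (Q R S : Set V) : Prop :=
  Q ∪ R ∪ S = Set.univ ∧ Disjoint Q R ∧ Disjoint Q S ∧ Disjoint R S ∧
  (∀ v ∈ Q, covered (edgesIn F Q) v) ∧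
  (∀ v ∈ R, comp (avoid E S) v ⊆ R ∧ Hypomatchable E (comp (avoid E S) v) ∧
    (∃! w, w ∈ comp (avoid E S) v ∧ ¬ covered (edgesIn F (comp (avoid E S) v)) w)) ∧
  (∀ s ∈ S, ∃ t, s(s, t) ∈ F ∧ t ∈ R ∧ ¬ covered (edgesIn F (comp (avoid E S) t)) t)

/-- `ER(K,F)`: the set of vertices evenly `K`-reachable from some `F`-uncovered vertex. -/
def ERset (K F : Set (Sym2 V)) : Set V := {x | ∃ a, ¬ covered F a ∧ evenReach K F a x}

/-- `OR(K,F)`: the set of vertices oddly `K`-reachable from some `F`-uncovered vertex. -/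
def ORset (K F : Set (Sym2 V)) : Set V := {x | ∃ a, ¬ covered F a ∧ oddReach K F a x}

/-!
Write `D = inessential E` for the vertices missed by some maximum matching and `A = barrier E`
for the vertices outside `D` with a neighbour in `D`; the decomposition is
`Q = (D ∪ A)ᶜ`, `R = D`, `S = A`.

Everything rests on exchanging the edges of an alternating path between two matchings
(`IsMatching.exists_swap`). It yields the stability lemma: deleting one vertex `a ∈ A` lowers
the matching number by one and turns `D` and `A` into `D ∪ {a}` and `A \ {a}`. Deleting the
vertices of `A` one at a time, every maximum matching `F` restricts to a maximum matching of
`G - A`, in which all of `D` is inessential. By Gallai's lemma (a connected graph in which every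
vertex is inessential is factor-critical, again proved by exchanging along a path) the
components of `G - A` inside `D` are hypomatchable, and counting shows that `F` exposes exactly
one vertex of each. The `F`-partner of `a ∈ A` lies in `D`, because `F` minus its edge at `a` is
a maximum matching of `G - a` missing that partner; so `F` matches `Q` within itself.
-/

open Set Relation
open scoped symmDiff

section Matching

variable {M N : Set (Sym2 V)} {a b x y z : V}

theorem covered_iff_exists_mem : covered M x ↔ ∃ y, s(x, y) ∈ M := by
  constructor
  · rintro ⟨e, he, hx⟩
    induction e using Sym2.ind with
    | _ a b =>
      rcases Sym2.mem_iff.1 hx with rfl | rfl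
      · exact ⟨b, he⟩
      · exact ⟨a, Sym2.eq_swap ▸ he⟩
  · rintro ⟨y, hy⟩
    exact ⟨_, hy, Sym2.mem_mk_left x y⟩

theorem covered_of_mem_left (h : s(x, y) ∈ M) : covered M x := ⟨_, h, Sym2.mem_mk_left x y⟩

theorem covered_of_mem_right (h : s(x, y) ∈ M) : covered M y := ⟨_, h, Sym2.mem_mk_right x y⟩

theorem covered.mono (h : M ⊆ N) : covered M x → covered N x :=
  fun ⟨e, he, hx⟩ => ⟨e, h he, hx⟩

theorem setOf_covered_insert : {v | covered (insert s(a, b) M) v} = {v | covered M v} ∪ {a, b} := by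
  ext v
  simp only [covered, mem_insert_iff, exists_eq_or_imp, Sym2.mem_iff]
  simp only [mem_ofPred_eq, mem_union, mem_insert_iff, mem_singleton_iff]
  exact or_comm

theorem IsMatching.subset (hM : IsMatching M) (h : N ⊆ M) : IsMatching N :=
  ⟨fun e he => hM.1 e (h he), fun e he f hf => hM.2 e (h he) f (h hf)⟩

theorem isMatching_empty : IsMatching (∅ : Set (Sym2 V)) :=
  ⟨fun _ h => h.elim, fun _ h => h.elim⟩

theorem IsMatching.eq_of_mem_of_mem (hM : IsMatching M) {e f : Sym2 V} (he : e ∈ M) (hf : f ∈ M)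
    (hxe : x ∈ e) (hxf : x ∈ f) : e = f :=
  by_contra fun hne => hM.2 e he f hf hne x hxe hxf

theorem IsMatching.ne (hM : IsMatching M) (h : s(x, y) ∈ M) : x ≠ y :=
  fun hxy => hM.1 _ h (Sym2.mk_isDiag_iff.2 hxy)

theorem IsMatching.eq_of_mem (hM : IsMatching M) (hy : s(x, y) ∈ M) (hz : s(x, z) ∈ M) :
    y = z :=
  Sym2.congr_right.1 (hM.eq_of_mem_of_mem hy hz (Sym2.mem_mk_left x y) (Sym2.mem_mk_left x z))

theorem IsMatching.insert_of_not_covered (hM : IsMatching M) (hab : a ≠ b) (ha : ¬ covered M a)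
    (hb : ¬ covered M b) : IsMatching (insert s(a, b) M) := by
  have hfree : ∀ v ∈ s(a, b), ¬ covered M v := by
    intro v hv
    rcases Sym2.mem_iff.1 hv with rfl | rfl
    exacts [ha, hb]
  refine ⟨?_, ?_⟩
  · rintro e (rfl | he)
    exacts [Sym2.mk_isDiag_iff.not.2 hab, hM.1 e he]
  · rintro e (rfl | he) f (rfl | hf) hef v hve hvf
    · exact hef rfl
    · exact hfree v hve ⟨f, hf, hvf⟩
    · exact hfree v hvf ⟨e, he, hve⟩
    · exact hM.2 e he f hf hef v hve hvf

theorem IsMatching.union (hM : IsMatching M) (hN : IsMatching N)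
    (h : ∀ e ∈ M, ∀ f ∈ N, ∀ v ∈ e, v ∉ f) : IsMatching (M ∪ N) := by
  refine ⟨fun e he => he.elim (hM.1 e) (hN.1 e), ?_⟩
  rintro e (he | he) f (hf | hf) hef v hve hvf
  · exact hM.2 e he f hf hef v hve hvf
  · exact h e he f hf v hve hvf
  · exact h f hf e he v hvf hve
  · exact hN.2 e he f hf hef v hve hvf

theorem IsMatching.setOf_covered_sdiff (hM : IsMatching M) (h : s(a, b) ∈ M) :
    {v | covered (M \ {s(a, b)}) v} = {v | covered M v} \ {a, b} := by
  ext v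
  constructor
  · rintro ⟨e, ⟨he, hne⟩, hv⟩
    refine ⟨⟨e, he, hv⟩, fun hab => hne (hM.eq_of_mem_of_mem he h hv ?_)⟩
    rcases hab with rfl | rfl
    exacts [Sym2.mem_mk_left _ _, Sym2.mem_mk_right _ _]
  · rintro ⟨⟨e, he, hv⟩, hab⟩
    refine ⟨e, ⟨he, ?_⟩, hv⟩
    rintro rfl
    exact hab (Sym2.mem_iff.1 hv)

theorem IsMatching.ncard_setOf_covered [Finite V] (hM : IsMatching M) :
    {v | covered M v}.ncard = 2 * M.ncard := by
  induction M, M.toFinite using Set.Finite.induction_on with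
  | empty => simp [covered]
  | @insert e M he _ ih =>
    induction e using Sym2.ind with
    | _ a b =>
      have hab : a ≠ b := hM.ne (mem_insert _ _)
      have hM' : IsMatching M := hM.subset (subset_insert _ _)
      have hdisj : Disjoint {v | covered M v} {a, b} := by
        refine disjoint_right.2 fun v hv hvM => ?_
        obtain ⟨f, hf, hvf⟩ := hvM
        refine hM.2 _ (mem_insert _ _) f (mem_insert_of_mem _ hf) (fun h => he (h ▸ hf)) v ?_ hvf
        rcases hv with rfl | rfl
        exacts [Sym2.mem_mk_left _ _, Sym2.mem_mk_right _ _]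
      rw [setOf_covered_insert, ncard_union_eq hdisj, ncard_pair hab, ih hM',
        ncard_insert_of_notMem he]
      ring

/-- `M'` and `N'` arise from `M` and `N` by exchanging the edges of the maximal alternating path
that leaves `x` along its `M`-edge; `t` is the other end of that path. -/
theorem IsMatching.exists_swap [Finite V] (hM : IsMatching M) (hN : IsMatching N)
    (hxM : covered M x) (hxN : ¬ covered N x) :
    ∃ t, t ≠ x ∧ (covered M t ∨ covered N t) ∧ ∃ M' N', M' ⊆ M ∪ N ∧ N' ⊆ M ∪ N ∧
      IsMatching M' ∧ IsMatching N' ∧ M'.ncard + N'.ncard = M.ncard + N.ncard ∧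
      {v | covered M' v} = {v | covered M v} ∆ {x, t} ∧
      {v | covered N' v} = {v | covered N v} ∆ {x, t} := by
  obtain ⟨n, hn⟩ : ∃ n, M.ncard + N.ncard = n := ⟨_, rfl⟩
  induction n using Nat.strong_induction_on generalizing M N x with
  | _ n ih =>
    obtain ⟨u, hxu⟩ := covered_iff_exists_mem.1 hxM
    have hux : u ≠ x := (hM.ne hxu).symm
    have huM : covered M u := covered_of_mem_right hxu
    have hM₁ : IsMatching (M \ {s(x, u)}) := hM.subset sdiff_subset
    have hcovM₁ := hM.setOf_covered_sdiff hxu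
    have hcardM₁ : (M \ {s(x, u)}).ncard + 1 = M.ncard := ncard_sdiff_singleton_add_one hxu
    by_cases huN : covered N u
    · have huM₁ : u ∉ {v | covered (M \ {s(x, u)}) v} := by
        rw [hcovM₁]
        simp
      have hxM₁ : x ∉ {v | covered (M \ {s(x, u)}) v} := by
        rw [hcovM₁]
        simp
      -- continue the path from `u` with the roles of the two matchings exchanged
      obtain ⟨t, htu, htcov, N', M', hN'sub, hM'sub, hN', hM', hcard, hcovN', hcovM'⟩ :=
        ih _ (by omega) hN hM₁ huN huM₁ rfl
      have hsub : N ∪ M \ {s(x, u)} ⊆ M ∪ N :=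
        union_subset subset_union_right (sdiff_subset.trans subset_union_left)
      have htx : t ≠ x := by
        rintro rfl
        exact htcov.elim hxN hxM₁
      have hxN' : x ∉ {v | covered N' v} := by
        rw [hcovN']
        simp [mem_symmDiff, hxN, hux.symm, htx.symm]
      have huN' : u ∉ {v | covered N' v} := by
        rw [hcovN']
        simp [mem_symmDiff, huN, htu.symm]
      have hxuN' : s(x, u) ∉ N' := fun h => hxN' (covered_of_mem_left h)
      refine ⟨t, htx, htcov.symm.imp_left (covered.mono sdiff_subset), M', insert s(x, u) N',
        ?_, ?_, hM', hN'.insert_of_not_covered hux.symm hxN' huN', ?_, ?_, ?_⟩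
      · exact hM'sub.trans hsub
      · exact insert_subset (.inl hxu) (hN'sub.trans hsub)
      · rw [ncard_insert_of_notMem hxuN']
        omega
      · rw [hcovM', hcovM₁]
        ext v
        simp only [mem_symmDiff, mem_sdiff, mem_insert_iff, mem_singleton_iff, mem_ofPred_eq]
        grind
      · rw [setOf_covered_insert, hcovN']
        ext v
        simp only [mem_symmDiff, mem_union, mem_insert_iff, mem_singleton_iff, mem_ofPred_eq]
        grind
    · have hxuN : s(x, u) ∉ N := fun h => hxN (covered_of_mem_left h)
      refine ⟨u, hux, .inl huM, M \ {s(x, u)}, insert s(x, u) N,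
        sdiff_subset.trans subset_union_left, insert_subset (.inl hxu) subset_union_right, hM₁,
        hN.insert_of_not_covered hux.symm hxN huN, ?_, ?_, ?_⟩
      · rw [ncard_insert_of_notMem hxuN]
        omega
      · rw [hcovM₁]
        ext v
        simp only [mem_symmDiff, mem_sdiff, mem_insert_iff, mem_singleton_iff, mem_ofPred_eq]
        grind
      · rw [setOf_covered_insert]
        ext v
        simp only [mem_symmDiff, mem_union, mem_insert_iff, mem_singleton_iff, mem_ofPred_eq]
        grind

end Matching

section MaxMatching

variable {E F M N : Set (Sym2 V)} {a b x : V}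

theorem exists_isMaxMatching [Finite V] (E : Set (Sym2 V)) : ∃ F, IsMaxMatching E F := by
  obtain ⟨F, ⟨hFE, hF⟩, hmax⟩ := exists_max_image {M | M ⊆ E ∧ IsMatching M} ncard
    (toFinite _) ⟨∅, empty_subset E, isMatching_empty⟩
  exact ⟨F, hFE, hF, fun M hME hM => hmax M ⟨hME, hM⟩⟩

theorem IsMaxMatching.ncard_eq (hM : IsMaxMatching E M) (hN : IsMaxMatching E N) :
    M.ncard = N.ncard :=
  le_antisymm (hN.2.2 M hM.1 hM.2.1) (hM.2.2 N hN.1 hN.2.1)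

theorem IsMaxMatching.of_ncard_le (hM : IsMaxMatching E M) (hNE : N ⊆ E) (hN : IsMatching N)
    (h : M.ncard ≤ N.ncard) : IsMaxMatching E N :=
  ⟨hNE, hN, fun P hPE hP => (hM.2.2 P hPE hP).trans h⟩

theorem IsMaxMatching.covered_or_covered [Finite V] (hM : IsMaxMatching E M) (hab : s(a, b) ∈ E)
    (hne : a ≠ b) : covered M a ∨ covered M b := by
  by_contra! h
  have hnotin : s(a, b) ∉ M := fun hab => h.1 (covered_of_mem_left hab)
  have := hM.2.2 _ (insert_subset hab hM.1) (hM.2.1.insert_of_not_covered hne h.1 h.2)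
  rw [ncard_insert_of_notMem hnotin] at this
  omega

end MaxMatching

section Avoid

variable {E M : Set (Sym2 V)} {S T : Set V} {a : V}

theorem avoid_subset : avoid E S ⊆ E := fun _ he => he.1

theorem avoid_empty : avoid E ∅ = E := by
  ext e
  simp [avoid]

theorem avoid_avoid : avoid (avoid E S) T = avoid E (S ∪ T) := by
  ext e
  simp only [avoid, mem_ofPred_eq, mem_union, not_or]
  grind

theorem not_covered_of_subset_avoid (hM : M ⊆ avoid E S) (ha : a ∈ S) : ¬ covered M a :=
  fun ⟨_, he, hae⟩ => (hM he).2 a hae ha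

end Avoid

def inessential (E : Set (Sym2 V)) : Set V := {x | ∃ M, IsMaxMatching E M ∧ ¬ covered M x}

def barrier (E : Set (Sym2 V)) : Set V :=
  {x | x ∉ inessential E ∧ ∃ y ∈ inessential E, s(x, y) ∈ E}

theorem IsMaxMatching.covered_of_notMem_inessential {E F : Set (Sym2 V)} {a : V}
    (hF : IsMaxMatching E F) (ha : a ∉ inessential E) : covered F a :=
  by_contra fun h => ha ⟨F, hF, h⟩

section Stability

variable [Finite V] {E F : Set (Sym2 V)} {T : Set V} {a : V}

theorem IsMaxMatching.avoid_singleton (hF : IsMaxMatching E F) (ha : a ∉ inessential E) :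
    IsMaxMatching (avoid E {a}) (avoid F {a}) ∧ (avoid F {a}).ncard + 1 = F.ncard := by
  obtain ⟨b, hab⟩ := covered_iff_exists_mem.1 (hF.covered_of_notMem_inessential ha)
  have heq : avoid F {a} = F \ {s(a, b)} := by
    ext e
    refine ⟨fun ⟨he, hae⟩ => ⟨he, fun h => hae a (h ▸ Sym2.mem_mk_left a b) rfl⟩,
      fun ⟨he, hne⟩ => ⟨he, fun u hu hua => hne ?_⟩⟩
    exact hF.2.1.eq_of_mem_of_mem he hab (hua ▸ hu) (Sym2.mem_mk_left a b)
  have hcard : (avoid F {a}).ncard + 1 = F.ncard := heq ▸ ncard_sdiff_singleton_add_one hab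
  refine ⟨⟨fun e he => ⟨hF.1 he.1, he.2⟩, hF.2.1.subset avoid_subset, fun P hPE hP => ?_⟩, hcard⟩
  have hlt : P.ncard < F.ncard := by
    refine lt_of_le_of_ne (hF.2.2 P (hPE.trans avoid_subset) hP) fun h => ha ?_
    exact ⟨P, hF.of_ncard_le (hPE.trans avoid_subset) hP h.ge, not_covered_of_subset_avoid hPE rfl⟩
  omega

theorem inessential_avoid_singleton_subset (ha : a ∈ barrier E) :
    inessential (avoid E {a}) ⊆ insert a (inessential E) := by
  rintro x ⟨M', hM', hxM'⟩
  obtain rfl | hxa := eq_or_ne x a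
  · exact mem_insert x _
  refine mem_insert_of_mem a ?_
  obtain ⟨haD, y, ⟨M, hM, hyM⟩, hay⟩ := ha
  by_cases hxM : covered M x
  swap
  · exact ⟨M, hM, hxM⟩
  have hM'card : M'.ncard + 1 = M.ncard := by
    obtain ⟨hMa, hcard⟩ := hM.avoid_singleton haD
    rw [hM'.ncard_eq hMa, hcard]
  have hMM'E : M ∪ M' ⊆ E := union_subset hM.1 (hM'.1.trans avoid_subset)
  obtain ⟨t, htx, -, M₁, N₁, hM₁sub, hN₁sub, hM₁, hN₁, hcard, hcovM₁, hcovN₁⟩ :=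
    hM.2.1.exists_swap hM'.2.1 hxM hxM'
  have hxM₁ : x ∉ {v | covered M₁ v} := by
    rw [hcovM₁]
    simp [mem_symmDiff, hxM]
  have hxy : x ≠ y := fun h => hyM (h ▸ hxM)
  obtain rfl | hta := eq_or_ne t a
  · -- `M₁` misses `t` and `y`, and adding the edge `ty` makes it maximum again
    have hty : t ≠ y := fun h => haD (h ▸ ⟨M, hM, hyM⟩)
    have htM₁ : t ∉ {v | covered M₁ v} := by
      rw [hcovM₁]
      simp [mem_symmDiff, hM.covered_of_notMem_inessential haD]
    have hyM₁ : y ∉ {v | covered M₁ v} := by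
      rw [hcovM₁]
      simp [mem_symmDiff, hyM, hty.symm, hxy.symm]
    have hnotin : s(t, y) ∉ M₁ := fun h => htM₁ (covered_of_mem_left h)
    have hN₁le := hM.2.2 N₁ (hN₁sub.trans hMM'E) hN₁
    refine ⟨insert s(t, y) M₁, hM.of_ncard_le (insert_subset hay (hM₁sub.trans hMM'E))
      (hM₁.insert_of_not_covered hty htM₁ hyM₁) (by rw [ncard_insert_of_notMem hnotin]; omega), ?_⟩
    change x ∉ {v | covered (insert s(t, y) M₁) v}
    rw [setOf_covered_insert]
    simp [hxa, hxy, show ¬ covered M₁ x from hxM₁]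
  · -- `N₁` still avoids `a`, so it is no larger than `M'` and `M₁` is maximum
    have haN₁ : a ∉ {v | covered N₁ v} := by
      rw [hcovN₁]
      simp [mem_symmDiff, hxa.symm, hta.symm, not_covered_of_subset_avoid hM'.1 rfl]
    have hN₁le := hM'.2.2 N₁ (fun e he => ⟨hMM'E (hN₁sub he),
      fun u hu hua => haN₁ ⟨e, he, (show u = a from hua) ▸ hu⟩⟩) hN₁
    exact ⟨M₁, hM.of_ncard_le (hM₁sub.trans hMM'E) hM₁ (by omega), hxM₁⟩

theorem inessential_avoid_singleton (ha : a ∈ barrier E) :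
    inessential (avoid E {a}) = insert a (inessential E) := by
  refine (inessential_avoid_singleton_subset ha).antisymm (insert_subset ?_ ?_)
  · obtain ⟨M, hM⟩ := exists_isMaxMatching (avoid E {a})
    exact ⟨M, hM, not_covered_of_subset_avoid hM.1 rfl⟩
  · rintro x ⟨M, hM, hxM⟩
    exact ⟨avoid M {a}, (hM.avoid_singleton ha.1).1, fun h => hxM (h.mono avoid_subset)⟩

theorem barrier_avoid_singleton (ha : a ∈ barrier E) :
    barrier (avoid E {a}) = barrier E \ {a} := by
  ext x
  simp only [barrier, inessential_avoid_singleton ha, mem_insert_iff, not_or, mem_sdiff,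
    mem_ofPred_eq, mem_singleton_iff]
  constructor
  · rintro ⟨⟨hxa, hx⟩, y, hy, hxy, hxya⟩
    have hya : y ≠ a := hxya y (Sym2.mem_mk_right x y)
    exact ⟨⟨hx, y, hy.resolve_left hya, hxy⟩, hxa⟩
  · rintro ⟨⟨hx, y, hy, hxy⟩, hxa⟩
    have hya : y ≠ a := fun h => ha.1 (h ▸ hy)
    refine ⟨⟨hxa, hx⟩, y, .inr hy, hxy, fun u hu => ?_⟩
    rcases Sym2.mem_iff.1 hu with rfl | rfl
    exacts [hxa, hya]

theorem IsMaxMatching.avoid_of_subset_barrier (hF : IsMaxMatching E F) (hT : T ⊆ barrier E) :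
    IsMaxMatching (avoid E T) (avoid F T) ∧ inessential (avoid E T) = inessential E ∪ T ∧
      barrier (avoid E T) = barrier E \ T := by
  induction T, T.toFinite using Set.Finite.induction_on with
  | empty =>
    rw [avoid_empty, avoid_empty, union_empty, sdiff_empty]
    exact ⟨hF, rfl, rfl⟩
  | @insert a T haT _ ih =>
    obtain ⟨hFT, hDT, hAT⟩ := ih ((subset_insert a T).trans hT)
    have ha : a ∈ barrier (avoid E T) := hAT ▸ ⟨hT (mem_insert a T), haT⟩
    rw [← union_singleton, ← avoid_avoid, ← avoid_avoid, inessential_avoid_singleton ha,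
      barrier_avoid_singleton ha, hDT, hAT, Set.sdiff_sdiff]
    exact ⟨(hFT.avoid_singleton ha.1).1, by rw [union_singleton, union_insert], rfl⟩

theorem IsMaxMatching.exists_mem_inessential_of_mem_barrier (hF : IsMaxMatching E F)
    (ha : a ∈ barrier E) : ∃ t ∈ inessential E, s(a, t) ∈ F := by
  obtain ⟨t, hat⟩ := covered_iff_exists_mem.1 (hF.covered_of_notMem_inessential ha.1)
  refine ⟨t, ?_, hat⟩
  have htD : t ∈ inessential (avoid E {a}) := by
    refine ⟨avoid F {a}, (hF.avoid_singleton ha.1).1, ?_⟩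
    rintro ⟨e, he, hte⟩
    have := hF.2.1.eq_of_mem_of_mem he.1 hat hte (Sym2.mem_mk_right a t)
    exact he.2 a (this ▸ Sym2.mem_mk_left a t) rfl
  rw [inessential_avoid_singleton ha] at htD
  exact htD.resolve_left (hF.2.1.ne hat).symm

end Stability

section Component

variable {E E' F M : Set (Sym2 V)} {C S : Set V} {u v w : V}

theorem mem_comp_self : v ∈ comp E v := ReflTransGen.refl

theorem mem_comp_of_mem (hu : u ∈ comp E v) (h : s(u, w) ∈ E) : w ∈ comp E v := hu.tail h

theorem edgesIn_subset : edgesIn M C ⊆ M := fun _ he => he.1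

theorem edgesIn_mono (h : E ⊆ E') : edgesIn E C ⊆ edgesIn E' C := fun _ he => ⟨h he.1, he.2⟩

theorem edgesIn_avoid_of_disjoint (h : Disjoint C S) : edgesIn (avoid F S) C = edgesIn F C := by
  ext e
  exact ⟨fun he => ⟨he.1.1, he.2⟩,
    fun he => ⟨⟨he.1, fun u hu => disjoint_left.1 h (he.2 u hu)⟩, he.2⟩⟩

theorem Hypomatchable.mono (hC : Hypomatchable E C) (h : E ⊆ E') : Hypomatchable E' C :=
  fun v hv => let ⟨M, hM, hMv⟩ := hC v hv; ⟨M, hM.trans (edgesIn_mono h), hMv⟩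

theorem reflTransGen_edgesIn_comp_of_mem (hu : u ∈ comp E v) :
    ReflTransGen (fun a b => s(a, b) ∈ edgesIn E (comp E v)) v u := by
  induction hu with
  | refl => exact .refl
  | tail hb hbc ih =>
    refine ih.tail ⟨hbc, fun z hz => ?_⟩
    rcases Sym2.mem_iff.1 hz with rfl | rfl
    exacts [hb, hb.tail hbc]

theorem reflTransGen_edgesIn_comp (hu : u ∈ comp E v) (hw : w ∈ comp E v) :
    ReflTransGen (fun a b => s(a, b) ∈ edgesIn E (comp E v)) u w := by
  have : Std.Symm (fun a b => s(a, b) ∈ edgesIn E (comp E v)) := ⟨fun a b h => Sym2.eq_swap ▸ h⟩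
  exact (Std.Symm.symm _ _ (reflTransGen_edgesIn_comp_of_mem hu)).trans
    (reflTransGen_edgesIn_comp_of_mem hw)

theorem IsMaxMatching.edgesIn_of_closed [Finite V] (hM : IsMaxMatching E M)
    (hC : ∀ u w, u ∈ C → s(u, w) ∈ E → w ∈ C) : IsMaxMatching (edgesIn E C) (edgesIn M C) := by
  have hout : ∀ e ∈ M \ edgesIn M C, ∀ u ∈ e, u ∉ C := by
    rintro e ⟨he, hne⟩ u hu huC
    induction e using Sym2.ind with
    | _ a b =>
      have hab := hM.1 he
      refine hne ⟨he, fun z hz => ?_⟩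
      rcases Sym2.mem_iff.1 hu with rfl | rfl <;> rcases Sym2.mem_iff.1 hz with rfl | rfl
      exacts [huC, hC _ _ huC hab, hC _ _ huC (Sym2.eq_swap ▸ hab), huC]
  refine ⟨edgesIn_mono hM.1, hM.2.1.subset edgesIn_subset, fun P hPE hP => ?_⟩
  have hsep : ∀ e ∈ P, ∀ f ∈ M \ edgesIn M C, ∀ u ∈ e, u ∉ f :=
    fun e he f hf u hue huf => hout f hf u huf ((hPE he).2 u hue)
  have hdisj : Disjoint P (M \ edgesIn M C) := disjoint_left.2 fun e he hf =>
    hsep e he e hf _ (Sym2.out_fst_mem e) (Sym2.out_fst_mem e)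
  have hle := hM.2.2 _ (union_subset (hPE.trans edgesIn_subset) (sdiff_subset.trans hM.1))
    (hP.union (hM.2.1.subset sdiff_subset) hsep)
  rw [ncard_union_eq hdisj] at hle
  have := ncard_sdiff_add_ncard_of_subset (show edgesIn M C ⊆ M from edgesIn_subset)
  omega

end Component

section FactorCritical

variable [Finite V] {E F H N P : Set (Sym2 V)} {C : Set V} {v : V}

theorem IsMaxMatching.eq_of_reflTransGen (hH : ∀ e ∈ H, ∀ z ∈ e, z ∈ inessential H)
    (hN : IsMaxMatching H N) {u w : V} (huw : ReflTransGen (fun a b => s(a, b) ∈ H) u w)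
    (hu : ¬ covered N u) (hw : ¬ covered N w) : u = w := by
  induction huw using ReflTransGen.head_induction_on generalizing N with
  | refl => rfl
  | @head a b hab _ ih =>
    by_contra haw
    by_cases hb : covered N b
    swap
    · obtain rfl := ih hN hb hw
      exact (hN.covered_or_covered hab haw).elim hu hb
    have hba : b ≠ a := fun h => hu (h ▸ hb)
    obtain ⟨N', hN', hbN'⟩ := hH _ hab b (Sym2.mem_mk_right a b)
    obtain ⟨t, htb, -, M, M', hMsub, hM'sub, hM, hM', hcard, hcovM, -⟩ :=
      hN.2.1.exists_swap hN'.2.1 hb hbN'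
    -- both matchings obtained by the exchange lie in `H`, so both are maximum
    have hMmax : IsMaxMatching H M := by
      have := hN'.2.2 M' (hM'sub.trans (union_subset hN.1 hN'.1)) hM'
      refine hN.of_ncard_le (hMsub.trans (union_subset hN.1 hN'.1)) hM ?_
      have := hN.ncard_eq hN'
      omega
    have hbM : b ∉ {v | covered M v} := by
      rw [hcovM]
      simp [mem_symmDiff, hb]
    obtain rfl | htw := eq_or_ne t w
    · have haM : a ∉ {v | covered M v} := by
        rw [hcovM]
        simp [mem_symmDiff, hu, hba.symm, haw]
      exact (hMmax.covered_or_covered hab hba.symm).elim haM hbM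
    · have hwb : w ≠ b := fun h => hw (h ▸ hb)
      have hwM : w ∉ {v | covered M v} := by
        rw [hcovM]
        simp [mem_symmDiff, hw, htw.symm, hwb]
      exact hw (ih hMmax hbM hwM ▸ hb)

theorem hypomatchable_comp_of_subset_inessential (hC : comp E v ⊆ inessential E) :
    Hypomatchable E (comp E v) := by
  have hclosed : ∀ u w, u ∈ comp E v → s(u, w) ∈ E → w ∈ comp E v := fun _ _ => mem_comp_of_mem
  have hess : ∀ z ∈ comp E v, z ∈ inessential (edgesIn E (comp E v)) := by
    intro z hz
    obtain ⟨M, hM, hzM⟩ := hC hz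
    exact ⟨edgesIn M _, hM.edgesIn_of_closed hclosed, fun h => hzM (h.mono edgesIn_subset)⟩
  intro w hw
  obtain ⟨N, hN, hwN⟩ := hess w hw
  refine ⟨N, hN.1, hN.2.1, hwN, fun u hu huw => by_contra fun huN => huw ?_⟩
  exact hN.eq_of_reflTransGen (fun e he z hz => hess z (he.2 z hz))
    (reflTransGen_edgesIn_comp hu hw) huN hwN

theorem existsUnique_not_covered (hN : IsMatching N) (hP : IsMatching P) (hv : v ∈ C)
    (hNC : {u | covered N u} = C \ {v}) (hPC : {u | covered P u} ⊆ C) (hle : N.ncard ≤ P.ncard) :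
    ∃! w, w ∈ C ∧ ¬ covered P w := by
  have hC := ncard_sdiff_singleton_add_one hv
  rw [← hNC, hN.ncard_setOf_covered] at hC
  have hPle := ncard_le_ncard hPC
  have hrest := ncard_sdiff_add_ncard_of_subset hPC
  rw [hP.ncard_setOf_covered] at hPle hrest
  obtain ⟨w, hw⟩ := ncard_eq_one.1 (show (C \ {u | covered P u}).ncard = 1 by omega)
  have hmem : ∀ u, u ∈ C ∧ ¬ covered P u ↔ u = w := fun u => Set.ext_iff.1 hw u
  exact ⟨w, (hmem w).2 rfl, fun u hu => (hmem u).1 hu⟩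

theorem IsMaxMatching.existsUnique_not_covered_comp (hF : IsMaxMatching E F)
    (hC : Hypomatchable E (comp E v)) :
    ∃! w, w ∈ comp E v ∧ ¬ covered (edgesIn F (comp E v)) w := by
  obtain ⟨N, hNE, hN, hvN, hNcov⟩ := hC v mem_comp_self
  have hFC := hF.edgesIn_of_closed (C := comp E v) fun _ _ => mem_comp_of_mem
  refine existsUnique_not_covered hN hFC.2.1 mem_comp_self ?_ ?_ (hFC.2.2 N hNE hN)
  · ext u
    refine ⟨fun ⟨e, he, hue⟩ => ⟨(hNE he).2 u hue, fun h => ?_⟩, fun ⟨hu, huv⟩ => hNcov u hu huv⟩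
    exact hvN ((show u = v from h) ▸ ⟨e, he, hue⟩)
  · exact fun u ⟨e, he, hue⟩ => he.2 u hue

end FactorCritical

section Decomposition

theorem comp_avoid_barrier_subset {E : Set (Sym2 V)} {v : V} (hv : v ∈ inessential E) :
    comp (avoid E (barrier E)) v ⊆ inessential E := by
  intro u hu
  induction hu with
  | refl => exact hv
  | tail _ hbc ih =>
    by_contra hc
    exact hbc.2 _ (Sym2.mem_mk_right _ _) ⟨hc, _, ih, Sym2.eq_swap ▸ hbc.1⟩

variable [Finite V] {E F : Set (Sym2 V)} {v : V}

theorem IsMaxMatching.covered_edgesIn_compl (hF : IsMaxMatching E F)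
    (hv : v ∉ inessential E ∪ barrier E) : covered (edgesIn F (inessential E ∪ barrier E)ᶜ) v := by
  have hvD : v ∉ inessential E := fun h => hv (.inl h)
  obtain ⟨w, hvw⟩ := covered_iff_exists_mem.1 (hF.covered_of_notMem_inessential hvD)
  have hwD : w ∉ inessential E := fun hw => hv (.inr ⟨hvD, w, hw, hF.1 hvw⟩)
  have hwA : w ∉ barrier E := fun hw => by
    obtain ⟨t, htD, hwt⟩ := hF.exists_mem_inessential_of_mem_barrier hw
    exact hv (.inl (hF.2.1.eq_of_mem hwt (Sym2.eq_swap ▸ hvw) ▸ htD))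
  refine ⟨s(v, w), ⟨hvw, fun u hu => ?_⟩, Sym2.mem_mk_left v w⟩
  rcases Sym2.mem_iff.1 hu with rfl | rfl
  exacts [hv, fun h => h.elim hwD hwA]

end Decomposition

theorem stmt_10_general {V : Type*} [Fintype V] (E F : Set (Sym2 V))
    (hF : IsMaxMatching E F) :
    ∃ Q R S : Set V, IsGE E F Q R S := by
  set D := inessential E
  set A := barrier E
  obtain ⟨hFA, hDA, -⟩ := hF.avoid_of_subset_barrier subset_rfl
  have hDA_disj : Disjoint D A := disjoint_left.2 fun _ hD hA => hA.1 hD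
  refine ⟨(D ∪ A)ᶜ, D, A, by rw [union_assoc, compl_union_self],
    disjoint_compl_left.mono_right subset_union_left,
    disjoint_compl_left.mono_right subset_union_right, hDA_disj,
    fun v hv => hF.covered_edgesIn_compl hv, fun v hv => ?_, fun a ha => ?_⟩
  · have hC : comp (avoid E A) v ⊆ D := comp_avoid_barrier_subset hv
    have hhyp :=
      hypomatchable_comp_of_subset_inessential (hC.trans (subset_union_left.trans hDA.ge))
    refine ⟨hC, hhyp.mono avoid_subset, ?_⟩
    rw [← edgesIn_avoid_of_disjoint (hDA_disj.mono_left hC)]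
    exact hFA.existsUnique_not_covered_comp hhyp
  · obtain ⟨t, htD, hat⟩ := hF.exists_mem_inessential_of_mem_barrier ha
    refine ⟨t, hat, htD, fun ⟨e, he, hte⟩ => ha.1 ?_⟩
    have hea := hF.2.1.eq_of_mem_of_mem he.1 hat hte (Sym2.mem_mk_right a t)
    exact comp_avoid_barrier_subset htD (he.2 a (hea ▸ Sym2.mem_mk_left a t))

/-- Gallai–Edmonds: every maximum matching `F` of a graph admits a
Gallai–Edmonds decomposition `(Q, R, S)`. -/
theorem stmt_10 {V : Type*} [Fintype V] (E F : Set (Sym2 V))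
    (hE : ∀ e ∈ E, ¬ e.IsDiag) (hF : IsMaxMatching E F) :
    ∃ Q R S : Set V, IsGE E F Q R S :=
  stmt_10_general E F hF
end

section
/- Let F be a maximum matching of a graph G, K = E(G)\F, and let (Q, R, S) be a Gallai–Edmonds decomposition with components H_i (i ∈ I) of G − S and uncovered-in-H_i vertices r_i. Then every vertex that is evenly K-reachable from some vertex not covered by F lies in ⋃_{i∈I} V(H_i); that is, ER(K,F) ⊆ ⋃_{i∈I} V(H_i). -/
/-!
Flipping `F` along an even alternating path from an `F`-exposed vertex to `x` gives a matching
`M` with `|M| = |F|` that exposes `x`. A Gallai–Edmonds decomposition forbids this for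
`x ∈ Q ∪ S`. Its components are hypomatchable, hence odd, so each contains an `M`-exposed vertex
or receives an `M`-edge from `S`: the number of components is at most
`#exposed(M) + |S|`, and strictly less when `x ∈ Q ∪ S` is exposed. On the other hand the
vertices `r_i` show that it is at least `#exposed(F) + |S| = #exposed(M) + |S|`.
-/

variable {V : Type*}

theorem IsMatching.mono {M N : Set (Sym2 V)} (hM : IsMatching M) (h : N ⊆ M) : IsMatching N :=
  ⟨fun e he => hM.1 e (h he), fun e he f hf => hM.2 e (h he) f (h hf)⟩

theorem IsMatching.eq_of_mem_of_mem_s11 {M : Set (Sym2 V)} (hM : IsMatching M) {u v w : V}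
    (hv : s(u, v) ∈ M) (hw : s(u, w) ∈ M) : v = w := by
  by_cases he : s(u, v) = s(u, w)
  · rcases Sym2.eq_iff.mp he with ⟨-, h⟩ | ⟨rfl, rfl⟩
    exacts [h, rfl]
  · exact absurd (Sym2.mem_mk_left u w) (hM.2 _ hv _ hw he u (Sym2.mem_mk_left u v))

theorem IsMatching.ncard_covered [Finite V] {M : Set (Sym2 V)} (hM : IsMatching M) :
    {v | covered M v}.ncard = 2 * M.ncard := by
  induction M, M.toFinite using Set.Finite.induction_on with
  | empty => simp [covered]
  | @insert e M heM hMfin ih =>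
    have hcov : {v | covered (insert e M) v} = {v | v ∈ e} ∪ {v | covered M v} := by
      ext v; simp [covered, or_and_right, exists_or]
    have hdisj : Disjoint {v | v ∈ e} {v | covered M v} :=
      Set.disjoint_left.mpr fun v hv ⟨f, hf, hvf⟩ =>
        hM.2 e (Set.mem_insert _ _) f (Set.mem_insert_of_mem _ hf) (fun h => heM (h ▸ hf)) v hv hvf
    have he : {v | v ∈ e}.ncard = 2 := by
      induction e using Sym2.ind with
      | _ x y =>
        have hxy : x ≠ y := by simpa using hM.1 _ (Set.mem_insert _ _)
        have hxy' : {v | v ∈ s(x, y)} = {x, y} := by ext; simp [Sym2.mem_iff]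
        rw [hxy', Set.ncard_pair hxy]
    rw [hcov, Set.ncard_union_eq hdisj, he, ih (hM.mono (Set.subset_insert _ _)),
      Set.ncard_insert_of_notMem heM hMfin]
    ring

theorem IsMatching.ncard_not_covered_le [Finite V] {F M : Set (Sym2 V)} (hF : IsMatching F)
    (hM : IsMatching M) (hFM : F.ncard ≤ M.ncard) :
    {v | ¬ covered M v}.ncard ≤ {v | ¬ covered F v}.ncard := by
  have hF' := Set.ncard_add_ncard_compl {v | covered F v}
  have hM' := Set.ncard_add_ncard_compl {v | covered M v}
  rw [hF.ncard_covered] at hF'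
  rw [hM.ncard_covered] at hM'
  simp only [Set.compl_ofPred] at hF' hM'
  omega

section Swap

variable {F : Set (Sym2 V)} {a b c : V}

theorem IsMatching.insert_sdiff (hF : IsMatching F) (ha : ¬ covered F a) (hab : a ≠ b)
    (hbc : s(b, c) ∈ F) : IsMatching (insert s(a, b) (F \ {s(b, c)})) := by
  have hb : ∀ e ∈ F, b ∈ e → e = s(b, c) := fun e he hbe => by
    by_contra hne
    exact hF.2 e he _ hbc hne b hbe (Sym2.mem_mk_left b c)
  refine ⟨?_, ?_⟩
  · rintro e (rfl | ⟨he, -⟩)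
    exacts [by simpa using hab, hF.1 e he]
  · have hab' : ∀ e ∈ F \ {s(b, c)}, ∀ v ∈ s(a, b), v ∉ e := by
      rintro e ⟨he, hne⟩ v hv hve
      rcases Sym2.mem_iff.mp hv with rfl | rfl
      exacts [ha ⟨e, he, hve⟩, hne (hb e he hve)]
    rintro e (rfl | he) f (rfl | hf) hef v hv
    · exact absurd rfl hef
    · exact hab' f hf v hv
    · exact fun hvf => hab' e he v hvf hv
    · exact hF.2 e he.1 f hf.1 hef v hv

theorem ncard_insert_sdiff [Finite V] (ha : ¬ covered F a) (hbc : s(b, c) ∈ F) :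
    (insert s(a, b) (F \ {s(b, c)})).ncard = F.ncard := by
  have hab : s(a, b) ∉ F \ {s(b, c)} := fun h => ha ⟨_, h.1, Sym2.mem_mk_left a b⟩
  have hpos : 0 < F.ncard := (Set.ncard_pos).mpr ⟨_, hbc⟩
  rw [Set.ncard_insert_of_notMem hab, Set.ncard_sdiff_singleton_of_mem hbc]
  omega

theorem not_covered_insert_sdiff (hF : IsMatching F) (ha : ¬ covered F a) (hbc : s(b, c) ∈ F) :
    ¬ covered (insert s(a, b) (F \ {s(b, c)})) c := by
  rintro ⟨e, rfl | ⟨he, hne⟩, hce⟩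
  · rcases Sym2.mem_iff.mp hce with rfl | rfl
    · exact ha ⟨_, hbc, Sym2.mem_mk_right _ _⟩
    · exact hF.1 _ hbc (Sym2.mk_isDiag_iff.mpr rfl)
  · by_contra hne'
    exact hF.2 e he _ hbc (by simpa using hne) c hce (Sym2.mem_mk_right b c)

end Swap

section AltPath

variable {K F : Set (Sym2 V)}

theorem AltPath.drop_two {a b : V} {q : List V} (h : AltPath K F (a :: b :: q)) (hq : q ≠ []) :
    AltPath K F q := by
  refine ⟨hq, (List.nodup_cons.mp (List.nodup_cons.mp h.2.1).2).2, fun i hi => ?_⟩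
  have := h.2.2 (i + 2) (by simp; omega)
  simpa [Nat.add_mod_right] using this

theorem AltPath.mono {K' F' : Set (Sym2 V)} {p : List V} (h : AltPath K F p)
    (hK : ∀ u ∈ p, ∀ w ∈ p, s(u, w) ∈ K → s(u, w) ∈ K')
    (hF : ∀ u ∈ p, ∀ w ∈ p, s(u, w) ∈ F → s(u, w) ∈ F') : AltPath K' F' p := by
  refine ⟨h.1, h.2.1, fun i hi => ?_⟩
  have := h.2.2 i hi
  split_ifs at this ⊢
  exacts [hK _ (List.getElem_mem _) _ (List.getElem_mem _) this,
    hF _ (List.getElem_mem _) _ (List.getElem_mem _) this]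

end AltPath

/-- Swapping `F` along the first two edges of an even alternating path from an exposed vertex
moves the exposed vertex two steps along the path. -/
theorem AltPath.exists_matching_not_covered_getLast [Finite V] {E : Set (Sym2 V)} :
    ∀ {F : Set (Sym2 V)} {p : List V} (hp : p ≠ []), F ⊆ E → IsMatching F →
      AltPath (E \ F) F p → ¬ covered F (p.head hp) → Odd p.length →
      ∃ M ⊆ E, IsMatching M ∧ M.ncard = F.ncard ∧ ¬ covered M (p.getLast hp)
  | _, [], hp, _, _, _, _, _ => absurd rfl hp
  | F, [a], _, hFE, hF, _, ha, _ => ⟨F, hFE, hF, rfl, ha⟩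
  | _, [_, _], _, _, _, _, _, hodd => by norm_num at hodd
  | F, a :: b :: c :: r, _, hFE, hF, halt, ha, hodd => by
    have hab : s(a, b) ∈ E \ F := by simpa using halt.2.2 0 (by simp)
    have hbc : s(b, c) ∈ F := halt.2.2 1 (by simp)
    have hnd := halt.2.1
    rw [List.nodup_cons, List.nodup_cons] at hnd
    have ha_q : a ∉ c :: r := fun h => hnd.1 (List.mem_cons_of_mem _ h)
    have hb_q : b ∉ c :: r := hnd.2.1
    have hab_ne : a ≠ b := fun h => hnd.1 (h ▸ List.mem_cons_self)
    have hq : AltPath (E \ insert s(a, b) (F \ {s(b, c)})) (insert s(a, b) (F \ {s(b, c)}))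
        (c :: r) := by
      refine (halt.drop_two (List.cons_ne_nil c r)).mono ?_ ?_
      · rintro u hu w - ⟨huwE, huwF⟩
        refine ⟨huwE, ?_⟩
        rintro (h | ⟨h, -⟩)
        · rcases Sym2.eq_iff.mp h with ⟨rfl, -⟩ | ⟨rfl, -⟩
          exacts [ha_q hu, hb_q hu]
        · exact huwF h
      · rintro u hu w hw huw
        refine Set.mem_insert_of_mem _ ⟨huw, fun h => ?_⟩
        rcases Sym2.eq_iff.mp h with ⟨rfl, -⟩ | ⟨-, rfl⟩
        exacts [hb_q hu, hb_q hw]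
    obtain ⟨M, hME, hM, hMcard, hMc⟩ := exists_matching_not_covered_getLast
      (List.cons_ne_nil c r) (by rintro e (rfl | ⟨he, -⟩); exacts [hab.1, hFE he])
      (hF.insert_sdiff ha hab_ne hbc) hq (not_covered_insert_sdiff hF ha hbc)
      (by simpa [Nat.odd_add] using hodd)
    exact ⟨M, hME, hM, hMcard.trans (ncard_insert_sdiff ha hbc), by simpa using hMc⟩

theorem exists_matching_not_covered_of_evenReach [Finite V] {E F : Set (Sym2 V)} {a x : V}
    (hFE : F ⊆ E) (hF : IsMatching F) (ha : ¬ covered F a) (hax : evenReach (E \ F) F a x) :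
    ∃ M ⊆ E, IsMatching M ∧ M.ncard = F.ncard ∧ ¬ covered M x := by
  obtain ⟨p, hp, halt, rfl, rfl, hodd⟩ := hax
  exact halt.exists_matching_not_covered_getLast hp hFE hF ha hodd

section Comp

variable {E' : Set (Sym2 V)} {u v w : V}

theorem mem_comp_self_s11 (E' : Set (Sym2 V)) (v : V) : v ∈ comp E' v :=
  Relation.ReflTransGen.refl

theorem mem_comp_of_mem_of_adj (hu : u ∈ comp E' v) (huw : s(u, w) ∈ E') : w ∈ comp E' v :=
  Relation.ReflTransGen.tail hu huw

theorem comp_eq_of_mem (hu : u ∈ comp E' v) : comp E' u = comp E' v := by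
  have : Std.Symm fun a b : V => s(a, b) ∈ E' := ⟨fun a b h => by rwa [Sym2.eq_swap]⟩
  ext w
  exact ⟨hu.trans, (Std.Symm.symm _ _ hu).trans⟩

theorem comp_eq_comp_of_mem (hv : w ∈ comp E' u) (hw : w ∈ comp E' v) : comp E' u = comp E' v :=
  (comp_eq_of_mem hv).symm.trans (comp_eq_of_mem hw)

end Comp

theorem Hypomatchable.odd_ncard [Finite V] {E : Set (Sym2 V)} {C : Set V} (hC : Hypomatchable E C)
    {v : V} (hv : v ∈ C) : Odd C.ncard := by
  obtain ⟨M, hMC, hM, hMv, hMcov⟩ := hC v hv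
  have hcov : {w | covered M w} = C \ {v} := by
    ext w
    refine ⟨fun ⟨e, he, hwe⟩ => ⟨(hMC he).2 w hwe, ?_⟩, fun ⟨hwC, hwv⟩ => hMcov w hwC hwv⟩
    rintro rfl
    exact hMv ⟨e, he, hwe⟩
  have h := hM.ncard_covered
  rw [hcov, Set.ncard_sdiff_singleton_of_mem hv] at h
  have hpos : 0 < C.ncard := (Set.ncard_pos).mpr ⟨v, hv⟩
  exact ⟨M.ncard, by omega⟩

namespace IsGE

variable {E F : Set (Sym2 V)} {Q R S : Set V}

theorem not_covered_subset (hGE : IsGE E F Q R S) : {v | ¬ covered F v} ⊆ R := by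
  intro u hu
  obtain ⟨huniv, -, -, -, hQ, -, hS⟩ := hGE
  rcases (huniv ▸ Set.mem_univ u : u ∈ Q ∪ R ∪ S) with (huQ | huR) | huS
  · obtain ⟨e, ⟨he, -⟩, hue⟩ := hQ u huQ
    exact absurd ⟨e, he, hue⟩ hu
  · exact huR
  · obtain ⟨t, ht, -⟩ := hS u huS
    exact absurd ⟨_, ht, Sym2.mem_mk_left u t⟩ hu

theorem mem_comp_of_adj (hGE : IsGE E F Q R S) {u v w : V} (hv : v ∈ R)
    (hu : u ∈ comp (avoid E S) v) (hw : w ∉ S) (huw : s(u, w) ∈ E) : w ∈ comp (avoid E S) v := by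
  have huS : u ∉ S := Set.disjoint_left.mp hGE.2.2.2.1 ((hGE.2.2.2.2.2.1 v hv).1 hu)
  refine mem_comp_of_mem_of_adj hu ⟨huw, fun x hx => ?_⟩
  rcases Sym2.mem_iff.mp hx with rfl | rfl
  exacts [huS, hw]

theorem eq_of_not_covered (hGE : IsGE E F Q R S) {v w₁ w₂ : V} (hv : v ∈ R)
    (h₁ : w₁ ∈ comp (avoid E S) v) (h₁' : ¬ covered (edgesIn F (comp (avoid E S) v)) w₁)
    (h₂ : w₂ ∈ comp (avoid E S) v) (h₂' : ¬ covered (edgesIn F (comp (avoid E S) v)) w₂) :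
    w₁ = w₂ :=
  (hGE.2.2.2.2.2.1 v hv).2.2.unique ⟨h₁, h₁'⟩ ⟨h₂, h₂'⟩

/-- Components are hypomatchable, hence odd, so none is perfectly matched inside itself. -/
theorem exists_adj_of_forall_covered [Finite V] (hGE : IsGE E F Q R S) {M : Set (Sym2 V)}
    (hME : M ⊆ E) (hM : IsMatching M) {v : V} (hv : v ∈ R)
    (hcov : ∀ w ∈ comp (avoid E S) v, covered M w) :
    ∃ y ∈ S, ∃ u ∈ comp (avoid E S) v, s(u, y) ∈ M := by
  by_contra! hno
  set C := comp (avoid E S) v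
  have hclosed : ∀ e ∈ M, ∀ u ∈ e, u ∈ C → ∀ w ∈ e, w ∈ C := by
    intro e he u hue huC w hwe
    induction e using Sym2.ind with
    | _ x y =>
      rcases Sym2.mem_iff.mp hue with rfl | rfl <;> rcases Sym2.mem_iff.mp hwe with rfl | rfl
      · exact huC
      · exact hGE.mem_comp_of_adj hv huC (fun hw => hno w hw u huC he) (hME he)
      · exact hGE.mem_comp_of_adj hv huC (fun hw => hno w hw u huC (Sym2.eq_swap ▸ he))
          (Sym2.eq_swap ▸ hME he)
      · exact huC
  have hcovC : {w | covered (edgesIn M C) w} = C := by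
    ext w
    refine ⟨fun ⟨e, he, hwe⟩ => he.2 w hwe, fun hw => ?_⟩
    obtain ⟨e, he, hwe⟩ := hcov w hw
    exact ⟨e, ⟨he, hclosed e he w hwe hw⟩, hwe⟩
  have h := (hM.mono fun _ he => he.1 : IsMatching (edgesIn M C)).ncard_covered
  rw [hcovC] at h
  exact Nat.not_even_iff_odd.mpr
    ((hGE.2.2.2.2.2.1 v hv).2.1.odd_ncard (mem_comp_self_s11 _ v)) ⟨_, h.trans (two_mul _)⟩

/-- Each component has a unique vertex left exposed by `F` inside it, which is either exposed in
`G` or matched into `S`; this assigns distinct components to the `F`-exposed vertices and to `S`. -/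
theorem ncard_not_covered_add_ncard_le [Finite V] (hGE : IsGE E F Q R S) (hF : IsMatching F) :
    {v | ¬ covered F v}.ncard + S.ncard ≤ (comp (avoid E S) '' R).ncard := by
  have hroot : ∀ u ∈ {v | ¬ covered F v} ∪ S, ∃ r ∈ R,
      ¬ covered (edgesIn F (comp (avoid E S) r)) r ∧ (s(u, r) ∈ F ∨ u = r ∧ ¬ covered F u) := by
    rintro u (hu | hu)
    · exact ⟨u, hGE.not_covered_subset hu,
        fun ⟨e, he, hue⟩ => hu ⟨e, he.1, hue⟩, Or.inr ⟨rfl, hu⟩⟩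
    · obtain ⟨t, ht, htR, htexp⟩ := hGE.2.2.2.2.2.2 u hu
      exact ⟨t, htR, htexp, Or.inl ht⟩
  choose! root hrootR hrootexp hrootF using hroot
  have hdisj : Disjoint {v | ¬ covered F v} S := by
    refine Set.disjoint_left.mpr fun u hu huS => ?_
    obtain ⟨t, ht, -⟩ := hGE.2.2.2.2.2.2 u huS
    exact hu ⟨_, ht, Sym2.mem_mk_left u t⟩
  rw [← Set.ncard_union_eq hdisj]
  refine Set.ncard_le_ncard_of_injOn (fun u => comp (avoid E S) (root u))
    (fun u hu => ⟨root u, hrootR u hu, rfl⟩) (fun u₁ hu₁ u₂ hu₂ h => ?_) (Set.toFinite _)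
  replace h : comp (avoid E S) (root u₁) = comp (avoid E S) (root u₂) := h
  have hr : root u₁ = root u₂ := by
    refine hGE.eq_of_not_covered (hrootR u₂ hu₂) ?_ ?_ (mem_comp_self_s11 _ _) (hrootexp u₂ hu₂)
    · exact h ▸ mem_comp_self_s11 _ _
    · exact h ▸ hrootexp u₁ hu₁
  rcases hrootF u₁ hu₁ with h₁ | ⟨h₁, h₁'⟩ <;> rcases hrootF u₂ hu₂ with h₂ | ⟨h₂, h₂'⟩
  · rw [Sym2.eq_swap] at h₁ h₂
    exact hF.eq_of_mem_of_mem_s11 h₁ (hr ▸ h₂)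
  · exact absurd ⟨_, h₁, h₂ ▸ hr ▸ Sym2.mem_mk_right _ _⟩ h₂'
  · exact absurd ⟨_, h₂, h₁ ▸ hr ▸ Sym2.mem_mk_right _ _⟩ h₁'
  · rw [h₁, h₂, hr]

/-- Each component contains a vertex exposed by `M` or receives an `M`-edge from `S`; this assigns
distinct vertices to distinct components. -/
theorem ncard_comp_le [Finite V] (hGE : IsGE E F Q R S) {M : Set (Sym2 V)} (hME : M ⊆ E)
    (hM : IsMatching M) :
    (comp (avoid E S) '' R).ncard ≤ {v | v ∈ R ∧ ¬ covered M v ∨ v ∈ S ∧ covered M v}.ncard := by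
  have hwit : ∀ C ∈ comp (avoid E S) '' R, ∃ y,
      (y ∈ C ∧ ¬ covered M y) ∨ (y ∈ S ∧ ∃ u ∈ C, s(u, y) ∈ M) := by
    rintro _ ⟨v, hv, rfl⟩
    by_cases hcov : ∀ w ∈ comp (avoid E S) v, covered M w
    · obtain ⟨y, hy, huy⟩ := hGE.exists_adj_of_forall_covered hME hM hv hcov
      exact ⟨y, Or.inr ⟨hy, huy⟩⟩
    · push Not at hcov
      obtain ⟨y, hy, hyM⟩ := hcov
      exact ⟨y, Or.inl ⟨hy, hyM⟩⟩
  rcases R.eq_empty_or_nonempty with rfl | ⟨v₀, -⟩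
  · simp
  have : Nonempty V := ⟨v₀⟩
  choose! g hg using hwit
  refine Set.ncard_le_ncard_of_injOn g ?_ ?_ (Set.toFinite _)
  · rintro _ ⟨v, hv, rfl⟩
    rcases hg _ ⟨v, hv, rfl⟩ with ⟨hgC, hgM⟩ | ⟨hgS, u, -, hu⟩
    · exact Or.inl ⟨(hGE.2.2.2.2.2.1 v hv).1 hgC, hgM⟩
    · exact Or.inr ⟨hgS, _, hu, Sym2.mem_mk_right _ _⟩
  · rintro _ ⟨v₁, hv₁, rfl⟩ _ ⟨v₂, hv₂, rfl⟩ h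
    rcases hg _ ⟨v₁, hv₁, rfl⟩ with ⟨h₁C, h₁M⟩ | ⟨-, u₁, hu₁C, hu₁⟩ <;>
      rcases hg _ ⟨v₂, hv₂, rfl⟩ with ⟨h₂C, h₂M⟩ | ⟨-, u₂, hu₂C, hu₂⟩
    · exact comp_eq_comp_of_mem h₁C (h ▸ h₂C)
    · exact absurd ⟨_, hu₂, Sym2.mem_mk_right _ _⟩ (h ▸ h₁M)
    · exact absurd ⟨_, hu₁, Sym2.mem_mk_right _ _⟩ (h ▸ h₂M)
    · rw [Sym2.eq_swap] at hu₁ hu₂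
      have hu : u₁ = u₂ := hM.eq_of_mem_of_mem_s11 hu₁ (h ▸ hu₂)
      exact comp_eq_comp_of_mem hu₁C (hu ▸ hu₂C)

theorem covered_of_ncard_le [Finite V] (hGE : IsGE E F Q R S) (hF : IsMatching F)
    {M : Set (Sym2 V)} (hME : M ⊆ E) (hM : IsMatching M) (hFM : F.ncard ≤ M.ncard) {x : V}
    (hx : x ∈ Q ∪ S) : covered M x := by
  by_contra hxM
  have hsub : {v | v ∈ R ∧ ¬ covered M v ∨ v ∈ S ∧ covered M v} ⊆
      ({v | ¬ covered M v} ∪ S) \ {x} := by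
    rintro v (⟨hvR, hvM⟩ | ⟨hvS, hvM⟩)
    · refine ⟨Or.inl hvM, fun (hvx : v = x) => ?_⟩
      subst hvx
      rcases hx with hxQ | hxS
      exacts [Set.disjoint_left.mp hGE.2.1 hxQ hvR, Set.disjoint_left.mp hGE.2.2.2.1 hvR hxS]
    · exact ⟨Or.inr hvS, fun (hvx : v = x) => hxM (hvx ▸ hvM)⟩
  have hxmem : x ∈ {v | ¬ covered M v} ∪ S := Or.inl hxM
  have hcount := calc
    {v | ¬ covered F v}.ncard + S.ncard ≤ (comp (avoid E S) '' R).ncard :=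
      hGE.ncard_not_covered_add_ncard_le hF
    _ ≤ {v | v ∈ R ∧ ¬ covered M v ∨ v ∈ S ∧ covered M v}.ncard := hGE.ncard_comp_le hME hM
    _ ≤ (({v | ¬ covered M v} ∪ S) \ {x}).ncard := Set.ncard_le_ncard hsub
    _ = ({v | ¬ covered M v} ∪ S).ncard - 1 := Set.ncard_sdiff_singleton_of_mem hxmem
    _ ≤ {v | ¬ covered M v}.ncard + S.ncard - 1 := Nat.sub_le_sub_right (Set.ncard_union_le _ _) 1
  have hpos : 0 < {v | ¬ covered M v}.ncard := (Set.ncard_pos).mpr ⟨x, hxM⟩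
  have := hF.ncard_not_covered_le hM hFM
  omega

end IsGE

theorem stmt_11_general {V : Type*} [Fintype V] (E F : Set (Sym2 V)) (Q R S : Set V)
    (hF : IsMaxMatching E F) (hGE : IsGE E F Q R S) :
    ERset (E \ F) F ⊆ R := by
  rintro x ⟨a, ha, hax⟩
  obtain ⟨M, hME, hM, hMF, hxM⟩ := exists_matching_not_covered_of_evenReach hF.1 hF.2.1 ha hax
  by_contra hxR
  have hx : x ∈ Q ∪ S := by
    rcases (hGE.1 ▸ Set.mem_univ x : x ∈ Q ∪ R ∪ S) with (hxQ | hxR') | hxS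
    exacts [Or.inl hxQ, absurd hxR' hxR, Or.inr hxS]
  exact hxM (hGE.covered_of_ncard_le hF.2.1 hME hM hMF.ge hx)

/-- given a Gallai–Edmonds decomposition `(Q,R,S)` for a maximum matching `F`
and `K = E \ F`, every evenly `K`-reachable vertex lies in `⋃ V(H_i) = R`. -/
theorem stmt_11 {V : Type*} [Fintype V] (E F : Set (Sym2 V)) (Q R S : Set V)
    (hE : ∀ e ∈ E, ¬ e.IsDiag) (hF : IsMaxMatching E F) (hGE : IsGE E F Q R S) :
    ERset (E \ F) F ⊆ R :=
  stmt_11_general E F Q R S hF hGE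
end
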